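/- arXiv:1804.00085 — 2 statements merged into one kernel-verified Lean document; each statement's English description precedes it below -/
import Mathlib

section
/- For every x ∈ [4/9, 1/2), one has σ²(x) < σ²(c). -/
open scoped BigOperators

/-- `V x ξ = min x ξ - x * ξ`. -/
noncomputable def V (x ξ : ℝ) : ℝ := min x ξ - x * ξ

/-- `σ²(x) = V(⟨x⟩, ⟨x⟩) + 2 ∑_{k=1}^∞ 6^{-k} V(⟨2^k x⟩, ⟨3^k x⟩)`. -/
noncomputable def sigmaSq (x : ℝ) : ℝ :=
  V (Int.fract x) (Int.fract x) +
    2 * ∑' k : ℕ, (1 / 6 ^ (k + 1) : ℝ) *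
      V (Int.fract ((2 : ℝ) ^ (k + 1) * x)) (Int.fract ((3 : ℝ) ^ (k + 1) * x))

/-- `c = 277/665 = 277/(3^6 - 2^6)`. -/
noncomputable def c : ℝ := 277 / 665

/-!
The `k`-th term of the series lies in `[0, 6^{-k}/4]`, so truncating `σ²` after `k = 2` lowers it
by at most `2 · 1/720 = 1/360`. For `x ∈ [4/9, 1/2)` the fractional parts of `x, 2x, 3x, 4x, 9x`
are affine in `x`, and the truncation is the quadratic `-5x² + 41x/9 - 7/9`, at most `421/1620`
(at `x = 41/90`), and `421/1620 + 1/360` is below the truncation `423821/1592010` of `σ²(c)`.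
-/

open Set

theorem Int.fract_eq_sub_of_le_of_lt {R : Type*} [Ring R] [LinearOrder R] [IsStrictOrderedRing R]
    [FloorRing R] {a : R} (n : ℤ) (h₁ : (n : R) ≤ a) (h₂ : a < n + 1) :
    Int.fract a = a - n := by
  rw [Int.fract, Int.floor_eq_iff.2 ⟨h₁, h₂⟩]

lemma V_comm (a b : ℝ) : V a b = V b a := by
  rw [V, V, min_comm, mul_comm]

lemma V_eq_of_le {a b : ℝ} (h : b ≤ a) : V a b = b * (1 - a) := by
  rw [V, min_eq_right h]; ring

lemma V_eq_of_le' {a b : ℝ} (h : a ≤ b) : V a b = a * (1 - b) := by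
  rw [V_comm, V_eq_of_le h]

lemma V_nonneg {a b : ℝ} (ha : a ∈ Icc (0 : ℝ) 1) (hb : b ∈ Icc (0 : ℝ) 1) : 0 ≤ V a b := by
  rcases le_total b a with h | h
  · rw [V_eq_of_le h]; nlinarith [ha.2, hb.1]
  · rw [V_eq_of_le' h]; nlinarith [ha.1, hb.2]

lemma V_le_one_fourth {a b : ℝ} (ha : a ∈ Icc (0 : ℝ) 1) (hb : b ∈ Icc (0 : ℝ) 1) :
    V a b ≤ 1 / 4 := by
  wlog h : b ≤ a generalizing a b
  · rw [V_comm]; exact this hb ha (le_of_not_ge h)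
  rw [V_eq_of_le h]
  nlinarith [sq_nonneg (a - 1 / 2), ha.2, hb.1]

lemma Int.fract_mem_Icc (a : ℝ) : Int.fract a ∈ Icc (0 : ℝ) 1 :=
  ⟨Int.fract_nonneg a, (Int.fract_lt_one a).le⟩

noncomputable def sigmaSqTerm (y : ℝ) (k : ℕ) : ℝ :=
  (1 / 6 ^ (k + 1) : ℝ) *
    V (Int.fract ((2 : ℝ) ^ (k + 1) * y)) (Int.fract ((3 : ℝ) ^ (k + 1) * y))

lemma sigmaSqTerm_nonneg (y : ℝ) (k : ℕ) : 0 ≤ sigmaSqTerm y k :=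
  mul_nonneg (by positivity) (V_nonneg (Int.fract_mem_Icc _) (Int.fract_mem_Icc _))

lemma sigmaSqTerm_le (y : ℝ) (k : ℕ) : sigmaSqTerm y k ≤ 1 / 24 * (1 / 6) ^ k := by
  calc sigmaSqTerm y k ≤ (1 / 6 ^ (k + 1) : ℝ) * (1 / 4) :=
        mul_le_mul_of_nonneg_left (V_le_one_fourth (Int.fract_mem_Icc _) (Int.fract_mem_Icc _))
          (by positivity)
    _ = 1 / 24 * (1 / 6) ^ k := by rw [pow_succ, one_div_pow]; ring

lemma summable_sigmaSqTerm (y : ℝ) : Summable (sigmaSqTerm y) :=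
  .of_nonneg_of_le (sigmaSqTerm_nonneg y) (sigmaSqTerm_le y)
    ((summable_geometric_of_lt_one (by norm_num) (by norm_num)).mul_left _)

lemma tsum_sigmaSqTerm_add_two_le (y : ℝ) : ∑' k, sigmaSqTerm y (k + 2) ≤ 1 / 720 := by
  have hle (k : ℕ) : sigmaSqTerm y (k + 2) ≤ 1 / 864 * (1 / 6) ^ k := by
    refine (sigmaSqTerm_le y (k + 2)).trans_eq ?_
    rw [pow_add]; ring
  calc ∑' k, sigmaSqTerm y (k + 2) ≤ ∑' k : ℕ, 1 / 864 * (1 / 6 : ℝ) ^ k :=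
        Summable.tsum_le_tsum hle ((summable_nat_add_iff 2).2 (summable_sigmaSqTerm y))
          ((summable_geometric_of_lt_one (by norm_num) (by norm_num)).mul_left _)
    _ = 1 / 720 := by
        rw [tsum_mul_left, tsum_geometric_of_lt_one (by norm_num) (by norm_num)]; norm_num

noncomputable def sigmaSqHead (y : ℝ) : ℝ :=
  V (Int.fract y) (Int.fract y) +
    2 * (V (Int.fract (2 * y)) (Int.fract (3 * y)) / 6 +
      V (Int.fract (4 * y)) (Int.fract (9 * y)) / 36)

lemma sigmaSq_eq_sigmaSqHead_add_tsum (y : ℝ) :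
    sigmaSq y = sigmaSqHead y + 2 * ∑' k, sigmaSqTerm y (k + 2) := by
  have hsplit := (summable_sigmaSqTerm y).sum_add_tsum_nat_add 2
  rw [Finset.sum_range_succ, Finset.sum_range_one] at hsplit
  change _ + 2 * ∑' k, sigmaSqTerm y k = _
  rw [← hsplit, sigmaSqHead, sigmaSqTerm, sigmaSqTerm]
  norm_num only [zero_add, pow_one, Nat.reduceAdd]
  ring

lemma sigmaSqHead_le_sigmaSq (y : ℝ) : sigmaSqHead y ≤ sigmaSq y := by
  rw [sigmaSq_eq_sigmaSqHead_add_tsum]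
  have htail : 0 ≤ ∑' k, sigmaSqTerm y (k + 2) := tsum_nonneg fun k => sigmaSqTerm_nonneg y _
  linarith

lemma sigmaSq_le_sigmaSqHead_add (y : ℝ) : sigmaSq y ≤ sigmaSqHead y + 1 / 360 := by
  rw [sigmaSq_eq_sigmaSqHead_add_tsum]
  linarith [tsum_sigmaSqTerm_add_two_le y]

lemma sigmaSqHead_of_mem_Ico {x : ℝ} (hx : x ∈ Ico (4 / 9 : ℝ) (1 / 2)) :
    sigmaSqHead x = -5 * x ^ 2 + 41 / 9 * x - 7 / 9 := by
  obtain ⟨hx₁, hx₂⟩ := hx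
  have h₁ : Int.fract x = x := Int.fract_eq_self.2 ⟨by linarith, by linarith⟩
  have h₂ : Int.fract (2 * x) = 2 * x := Int.fract_eq_self.2 ⟨by linarith, by linarith⟩
  have h₃ : Int.fract (3 * x) = 3 * x - 1 :=
    mod_cast Int.fract_eq_sub_of_le_of_lt 1 (by push_cast; linarith) (by push_cast; linarith)
  have h₄ : Int.fract (4 * x) = 4 * x - 1 :=
    mod_cast Int.fract_eq_sub_of_le_of_lt 1 (by push_cast; linarith) (by push_cast; linarith)
  have h₉ : Int.fract (9 * x) = 9 * x - 4 :=
    mod_cast Int.fract_eq_sub_of_le_of_lt 4 (by push_cast; linarith) (by push_cast; linarith)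
  rw [sigmaSqHead, h₁, h₂, h₃, h₄, h₉, V_eq_of_le le_rfl, V_eq_of_le (by linarith),
    V_eq_of_le (by linarith)]
  ring

lemma sigmaSqHead_c : sigmaSqHead c = 423821 / 1592010 := by
  have h₁ : Int.fract c = 277 / 665 := Int.fract_eq_self.2 ⟨by norm_num [c], by norm_num [c]⟩
  have h₂ : Int.fract (2 * c) = 554 / 665 := by
    rw [Int.fract_eq_self.2 ⟨by norm_num [c], by norm_num [c]⟩]; norm_num [c]
  have h₃ : Int.fract (3 * c) = 166 / 665 := by
    rw [Int.fract_eq_sub_of_le_of_lt 1 (by norm_num [c]) (by norm_num [c])]; norm_num [c]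
  have h₄ : Int.fract (4 * c) = 443 / 665 := by
    rw [Int.fract_eq_sub_of_le_of_lt 1 (by norm_num [c]) (by norm_num [c])]; norm_num [c]
  have h₉ : Int.fract (9 * c) = 498 / 665 := by
    rw [Int.fract_eq_sub_of_le_of_lt 3 (by norm_num [c]) (by norm_num [c])]; norm_num [c]
  rw [sigmaSqHead, h₁, h₂, h₃, h₄, h₉, V_eq_of_le le_rfl, V_eq_of_le (by norm_num),
    V_eq_of_le' (by norm_num)]
  norm_num

theorem sigmaSq_lt_on_interval_9 (x : ℝ) (hx : x ∈ Set.Ico (4/9 : ℝ) (1/2)) :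
    sigmaSq x < sigmaSq c := by
  calc sigmaSq x ≤ sigmaSqHead x + 1 / 360 := sigmaSq_le_sigmaSqHead_add x
    _ = -5 * x ^ 2 + 41 / 9 * x - 7 / 9 + 1 / 360 := by rw [sigmaSqHead_of_mem_Ico hx]
    _ < sigmaSqHead c := by rw [sigmaSqHead_c]; nlinarith [sq_nonneg (x - 41 / 90)]
    _ ≤ sigmaSq c := sigmaSqHead_le_sigmaSq c
end

section
/- For every x ∈ [101/243, 857/2059), one has σ²(x) < σ²(c). -/
open scoped BigOperators

set_option maxHeartbeats 1000000

noncomputable def trm (x : ℝ) (k : ℕ) : ℝ :=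
  (1 / 6 ^ (k + 1) : ℝ) *
    V (Int.fract ((2 : ℝ) ^ (k + 1) * x)) (Int.fract ((3 : ℝ) ^ (k + 1) * x))

lemma sigmaSq_eq (x : ℝ) :
    sigmaSq x = V (Int.fract x) (Int.fract x) + 2 * ∑' k : ℕ, trm x k := rfl

lemma fract_eq_sub {y : ℝ} {m : ℤ} (h1 : (m : ℝ) ≤ y) (h2 : y < m + 1) :
    Int.fract y = y - m := by
  rw [Int.fract, Int.floor_eq_iff.mpr ⟨h1, h2⟩]

lemma fract_help' {y r : ℝ} {m : ℤ} (hy : y = r + m) (h1 : 0 ≤ r) (h2 : r < 1) :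
    Int.fract y = r := by
  rw [hy, Int.fract_add_intCast, Int.fract_eq_self.mpr ⟨h1, h2⟩]

lemma fract_help {y z : ℝ} {m : ℤ} (hy : y = z) (h1 : (m : ℝ) ≤ z) (h2 : z < m + 1) :
    Int.fract y = z - m := by
  rw [hy, Int.fract, Int.floor_eq_iff.mpr ⟨h1, h2⟩]

lemma V_nonneg_s17 {a b : ℝ} (ha0 : 0 ≤ a) (ha1 : a ≤ 1) (hb0 : 0 ≤ b) (hb1 : b ≤ 1) :
    0 ≤ V a b := by
  rcases le_total a b with h | h
  · rw [V, min_eq_left h]; nlinarith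
  · rw [V, min_eq_right h]; nlinarith

lemma V_le_quarter {a b : ℝ} (ha0 : 0 ≤ a) (ha1 : a ≤ 1) (hb0 : 0 ≤ b) (hb1 : b ≤ 1) :
    V a b ≤ 1 / 4 := by
  rcases le_total a b with h | h
  · rw [V, min_eq_left h]
    nlinarith [sq_nonneg (2*a-1), mul_nonneg ha0 (sub_nonneg.mpr h)]
  · rw [V, min_eq_right h]
    nlinarith [sq_nonneg (2*b-1), mul_nonneg hb0 (sub_nonneg.mpr h)]

lemma V_le_right (a b : ℝ) : V a b ≤ b - a * b :=
  sub_le_sub_right (min_le_right a b) _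

lemma V_le_left (a b : ℝ) : V a b ≤ a - a * b :=
  sub_le_sub_right (min_le_left a b) _

lemma V_le_self {a : ℝ} (b : ℝ) (ha0 : 0 ≤ a) (ha1 : a ≤ 1) : V a b ≤ a - a * a := by
  rcases le_total a b with h | h
  · rw [V, min_eq_left h]; nlinarith
  · rw [V, min_eq_right h]; nlinarith

lemma trm_nonneg (x : ℝ) (k : ℕ) : 0 ≤ trm x k := by
  have h := V_nonneg_s17 (Int.fract_nonneg ((2:ℝ)^(k+1) * x))
    (le_of_lt (Int.fract_lt_one ((2:ℝ)^(k+1) * x)))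
    (Int.fract_nonneg ((3:ℝ)^(k+1) * x))
    (le_of_lt (Int.fract_lt_one ((3:ℝ)^(k+1) * x)))
  have : (0:ℝ) ≤ 1 / 6 ^ (k+1) := by positivity
  exact mul_nonneg this h

lemma trm_le (x : ℝ) (k : ℕ) : trm x k ≤ (1/24) * (1/6 : ℝ) ^ k := by
  have h := V_le_quarter (Int.fract_nonneg ((2:ℝ)^(k+1) * x))
    (le_of_lt (Int.fract_lt_one ((2:ℝ)^(k+1) * x)))
    (Int.fract_nonneg ((3:ℝ)^(k+1) * x))
    (le_of_lt (Int.fract_lt_one ((3:ℝ)^(k+1) * x)))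
  have hp : (0:ℝ) ≤ 1 / 6 ^ (k+1) := by positivity
  calc trm x k ≤ (1 / 6 ^ (k+1)) * (1/4) := mul_le_mul_of_nonneg_left h hp
    _ = (1/24) * (1/6 : ℝ) ^ k := by
        rw [one_div_pow, pow_succ]; ring

lemma trm_summable (x : ℝ) : Summable (trm x) := by
  refine Summable.of_nonneg_of_le (trm_nonneg x) (trm_le x) ?_
  exact (summable_geometric_of_lt_one (by norm_num) (by norm_num)).mul_left _

theorem sigmaSq_lt_on_interval_17 (x : ℝ) (hx : x ∈ Set.Ico (101/243 : ℝ) (857/2059)) :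
    sigmaSq x < sigmaSq c := by
  obtain ⟨hx1, hx2⟩ := hx
  -- upper bound for sigmaSq x
  have hs := trm_summable x
  have hsplit := (Summable.sum_add_tsum_nat_add 7 hs).symm
  -- tail bound
  have htail : ∑' k : ℕ, trm x (k + 7) ≤ (1/20) * (1/6 : ℝ) ^ 7 := by
    have h1 : ∀ k : ℕ, trm x (k + 7) ≤ ((1/24) * (1/6 : ℝ) ^ 7) * (1/6 : ℝ) ^ k := by
      intro k
      calc trm x (k + 7) ≤ (1/24) * (1/6 : ℝ) ^ (k + 7) := trm_le x (k + 7)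
        _ = ((1/24) * (1/6 : ℝ) ^ 7) * (1/6 : ℝ) ^ k := by rw [pow_add]; ring
    have hs1 : Summable (fun k : ℕ => trm x (k + 7)) := (summable_nat_add_iff 7).mpr hs
    have hs2 : Summable (fun k : ℕ => ((1/24) * (1/6 : ℝ) ^ 7) * (1/6 : ℝ) ^ k) :=
      (summable_geometric_of_lt_one (by norm_num) (by norm_num)).mul_left _
    calc ∑' k : ℕ, trm x (k + 7) ≤ ∑' k : ℕ, ((1/24) * (1/6 : ℝ) ^ 7) * (1/6 : ℝ) ^ k :=
          Summable.tsum_le_tsum h1 hs1 hs2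
      _ = ((1/24) * (1/6 : ℝ) ^ 7) * ∑' k : ℕ, (1/6 : ℝ) ^ k := tsum_mul_left
      _ = (1/20) * (1/6 : ℝ) ^ 7 := by
          rw [tsum_geometric_of_lt_one (by norm_num) (by norm_num)]; norm_num
  -- per-term fract computations
  have ha0 : Int.fract ((2:ℝ)^(0+1) * x) = 2*x - ((0:ℤ):ℝ) :=
    fract_help (by norm_num) (by push_cast; linarith) (by push_cast; linarith)
  have hb0 : Int.fract ((3:ℝ)^(0+1) * x) = 3*x - ((1:ℤ):ℝ) :=
    fract_help (by norm_num) (by push_cast; linarith) (by push_cast; linarith)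
  have ha1 : Int.fract ((2:ℝ)^(1+1) * x) = 4*x - ((1:ℤ):ℝ) :=
    fract_help (by norm_num) (by push_cast; linarith) (by push_cast; linarith)
  have hb1 : Int.fract ((3:ℝ)^(1+1) * x) = 9*x - ((3:ℤ):ℝ) :=
    fract_help (by norm_num) (by push_cast; linarith) (by push_cast; linarith)
  have ha2 : Int.fract ((2:ℝ)^(2+1) * x) = 8*x - ((3:ℤ):ℝ) :=
    fract_help (by norm_num) (by push_cast; linarith) (by push_cast; linarith)
  have hb2 : Int.fract ((3:ℝ)^(2+1) * x) = 27*x - ((11:ℤ):ℝ) :=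
    fract_help (by norm_num) (by push_cast; linarith) (by push_cast; linarith)
  have ha3 : Int.fract ((2:ℝ)^(3+1) * x) = 16*x - ((6:ℤ):ℝ) :=
    fract_help (by norm_num) (by push_cast; linarith) (by push_cast; linarith)
  have hb3 : Int.fract ((3:ℝ)^(3+1) * x) = 81*x - ((33:ℤ):ℝ) :=
    fract_help (by norm_num) (by push_cast; linarith) (by push_cast; linarith)
  have ha4 : Int.fract ((2:ℝ)^(4+1) * x) = 32*x - ((13:ℤ):ℝ) :=
    fract_help (by norm_num) (by push_cast; linarith) (by push_cast; linarith)
  have hb4 : Int.fract ((3:ℝ)^(4+1) * x) = 243*x - ((101:ℤ):ℝ) :=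
    fract_help (by norm_num) (by push_cast; linarith) (by push_cast; linarith)
  have ha5 : Int.fract ((2:ℝ)^(5+1) * x) = 64*x - ((26:ℤ):ℝ) :=
    fract_help (by norm_num) (by push_cast; linarith) (by push_cast; linarith)
  have hb5 : Int.fract ((3:ℝ)^(5+1) * x) = 729*x - ((303:ℤ):ℝ) :=
    fract_help (by norm_num) (by push_cast; linarith) (by push_cast; linarith)
  have ha6 : Int.fract ((2:ℝ)^(6+1) * x) = 128*x - ((53:ℤ):ℝ) :=
    fract_help (by norm_num) (by push_cast; linarith) (by push_cast; linarith)
  have h0 : trm x 0 ≤ (1/6^(0+1)) * ((3*x - 1) - (2*x - 0)*(3*x - 1)) := by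
    have hV := V_le_right (2*x - 0) (3*x - 1)
    unfold trm
    rw [ha0, hb0]
    push_cast
    have hp : (0:ℝ) ≤ 1/6^(0+1) := by positivity
    linarith [mul_le_mul_of_nonneg_left hV hp]
  have h1 : trm x 1 ≤ (1/6^(1+1)) * ((4*x - 1) - (4*x - 1)*(9*x - 3)) := by
    have hV := V_le_left (4*x - 1) (9*x - 3)
    unfold trm
    rw [ha1, hb1]
    push_cast
    have hp : (0:ℝ) ≤ 1/6^(1+1) := by positivity
    linarith [mul_le_mul_of_nonneg_left hV hp]
  have h2 : trm x 2 ≤ (1/6^(2+1)) * ((27*x - 11) - (8*x - 3)*(27*x - 11)) := by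
    have hV := V_le_right (8*x - 3) (27*x - 11)
    unfold trm
    rw [ha2, hb2]
    push_cast
    have hp : (0:ℝ) ≤ 1/6^(2+1) := by positivity
    linarith [mul_le_mul_of_nonneg_left hV hp]
  have h3 : trm x 3 ≤ (1/6^(3+1)) * ((16*x - 6) - (16*x - 6)*(81*x - 33)) := by
    have hV := V_le_left (16*x - 6) (81*x - 33)
    unfold trm
    rw [ha3, hb3]
    push_cast
    have hp : (0:ℝ) ≤ 1/6^(3+1) := by positivity
    linarith [mul_le_mul_of_nonneg_left hV hp]
  have h4 : trm x 4 ≤ (1/6^(4+1)) * ((243*x - 101) - (32*x - 13)*(243*x - 101)) := by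
    have hV := V_le_right (32*x - 13) (243*x - 101)
    unfold trm
    rw [ha4, hb4]
    push_cast
    have hp : (0:ℝ) ≤ 1/6^(4+1) := by positivity
    linarith [mul_le_mul_of_nonneg_left hV hp]
  have h5 : trm x 5 ≤ (1/6^(5+1)) * ((729*x - 303) - (64*x - 26)*(729*x - 303)) := by
    have hV := V_le_right (64*x - 26) (729*x - 303)
    unfold trm
    rw [ha5, hb5]
    push_cast
    have hp : (0:ℝ) ≤ 1/6^(5+1) := by positivity
    linarith [mul_le_mul_of_nonneg_left hV hp]
  have h6 : trm x 6 ≤ (1/6^(6+1)) * ((128*x - 53) - (128*x - 53)*(128*x - 53)) := by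
    have hV := V_le_self (Int.fract ((3:ℝ)^(6+1) * x)) (a := 128*x - 53)
      (by linarith) (by linarith)
    unfold trm
    rw [ha6]
    push_cast
    have hp : (0:ℝ) ≤ 1/6^(6+1) := by positivity
    linarith [mul_le_mul_of_nonneg_left hV hp]
  have hsum7 : ∑ i ∈ Finset.range 7, trm x i ≤
      (1/6^1) * ((3*x - 1) - (2*x)*(3*x - 1))
      + (1/6^2) * ((4*x - 1) - (4*x - 1)*(9*x - 3))
      + (1/6^3) * ((27*x - 11) - (8*x - 3)*(27*x - 11))
      + (1/6^4) * ((16*x - 6) - (16*x - 6)*(81*x - 33))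
      + (1/6^5) * ((243*x - 101) - (32*x - 13)*(243*x - 101))
      + (1/6^6) * ((729*x - 303) - (64*x - 26)*(729*x - 303))
      + (1/6^7) * ((128*x - 53) - (128*x - 53)*(128*x - 53)) := by
    rw [Finset.sum_range_succ, Finset.sum_range_succ, Finset.sum_range_succ,
      Finset.sum_range_succ, Finset.sum_range_succ, Finset.sum_range_succ,
      Finset.sum_range_succ, Finset.sum_range_zero]
    linarith [h0, h1, h2, h3, h4, h5, h6]
  have hfx : Int.fract x = x := Int.fract_eq_self.mpr ⟨by linarith, by linarith⟩
  have hUB : sigmaSq x ≤ x - x*x + 2 * ((1/6^1) * ((3*x - 1) - (2*x)*(3*x - 1))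
      + (1/6^2) * ((4*x - 1) - (4*x - 1)*(9*x - 3))
      + (1/6^3) * ((27*x - 11) - (8*x - 3)*(27*x - 11))
      + (1/6^4) * ((16*x - 6) - (16*x - 6)*(81*x - 33))
      + (1/6^5) * ((243*x - 101) - (32*x - 13)*(243*x - 101))
      + (1/6^6) * ((729*x - 303) - (64*x - 26)*(729*x - 303))
      + (1/6^7) * ((128*x - 53) - (128*x - 53)*(128*x - 53))
      + (1/20) * (1/6 : ℝ) ^ 7) := by
    rw [sigmaSq_eq, hfx, hsplit, V, min_self]
    linarith [hsum7, htail]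
  -- lower bound for sigmaSq c
  have hsc := trm_summable c
  have h8 : ∑ i ∈ Finset.range 8, trm c i ≤ ∑' k, trm c k :=
    Summable.sum_le_tsum _ (fun i _ => trm_nonneg c i) hsc
  have hca0 : Int.fract ((2:ℝ)^(0+1) * c) = 554/665 :=
    fract_help' (m := 0) (by rw [c]; push_cast; norm_num) (by norm_num) (by norm_num)
  have hcb0 : Int.fract ((3:ℝ)^(0+1) * c) = 166/665 :=
    fract_help' (m := 1) (by rw [c]; push_cast; norm_num) (by norm_num) (by norm_num)
  have ht0 : trm c 0 = 3071/442225 := by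
    unfold trm
    rw [hca0, hcb0, V]
    rw [min_def]
    norm_num
  have hca1 : Int.fract ((2:ℝ)^(1+1) * c) = 443/665 :=
    fract_help' (m := 1) (by rw [c]; push_cast; norm_num) (by norm_num) (by norm_num)
  have hcb1 : Int.fract ((3:ℝ)^(1+1) * c) = 498/665 :=
    fract_help' (m := 3) (by rw [c]; push_cast; norm_num) (by norm_num) (by norm_num)
  have ht1 : trm c 1 = 73981/15920100 := by
    unfold trm
    rw [hca1, hcb1, V]
    rw [min_def]
    norm_num
  have hca2 : Int.fract ((2:ℝ)^(2+1) * c) = 221/665 :=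
    fract_help' (m := 3) (by rw [c]; push_cast; norm_num) (by norm_num) (by norm_num)
  have hcb2 : Int.fract ((3:ℝ)^(2+1) * c) = 164/665 :=
    fract_help' (m := 11) (by rw [c]; push_cast; norm_num) (by norm_num) (by norm_num)
  have ht2 : trm c 2 = 3034/3980025 := by
    unfold trm
    rw [hca2, hcb2, V]
    rw [min_def]
    norm_num
  have hca3 : Int.fract ((2:ℝ)^(3+1) * c) = 442/665 :=
    fract_help' (m := 6) (by rw [c]; push_cast; norm_num) (by norm_num) (by norm_num)
  have hcb3 : Int.fract ((3:ℝ)^(3+1) * c) = 492/665 :=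
    fract_help' (m := 33) (by rw [c]; push_cast; norm_num) (by norm_num) (by norm_num)
  have ht3 : trm c 3 = 38233/286561800 := by
    unfold trm
    rw [hca3, hcb3, V]
    rw [min_def]
    norm_num
  have hca4 : Int.fract ((2:ℝ)^(4+1) * c) = 219/665 :=
    fract_help' (m := 13) (by rw [c]; push_cast; norm_num) (by norm_num) (by norm_num)
  have hcb4 : Int.fract ((3:ℝ)^(4+1) * c) = 146/665 :=
    fract_help' (m := 101) (by rw [c]; push_cast; norm_num) (by norm_num) (by norm_num)
  have ht4 : trm c 4 = 16279/859685400 := by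
    unfold trm
    rw [hca4, hcb4, V]
    rw [min_def]
    norm_num
  have hca5 : Int.fract ((2:ℝ)^(5+1) * c) = 438/665 :=
    fract_help' (m := 26) (by rw [c]; push_cast; norm_num) (by norm_num) (by norm_num)
  have hcb5 : Int.fract ((3:ℝ)^(5+1) * c) = 438/665 :=
    fract_help' (m := 303) (by rw [c]; push_cast; norm_num) (by norm_num) (by norm_num)
  have ht5 : trm c 5 = 16571/3438741600 := by
    unfold trm
    rw [hca5, hcb5, V]
    rw [min_def]
    norm_num
  have hca6 : Int.fract ((2:ℝ)^(6+1) * c) = 211/665 :=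
    fract_help' (m := 53) (by rw [c]; push_cast; norm_num) (by norm_num) (by norm_num)
  have hcb6 : Int.fract ((3:ℝ)^(6+1) * c) = 649/665 :=
    fract_help' (m := 910) (by rw [c]; push_cast; norm_num) (by norm_num) (by norm_num)
  have ht6 : trm c 6 = 211/7737168600 := by
    unfold trm
    rw [hca6, hcb6, V]
    rw [min_def]
    norm_num
  have hca7 : Int.fract ((2:ℝ)^(7+1) * c) = 422/665 :=
    fract_help' (m := 106) (by rw [c]; push_cast; norm_num) (by norm_num) (by norm_num)
  have hcb7 : Int.fract ((3:ℝ)^(7+1) * c) = 617/665 :=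
    fract_help' (m := 2732) (by rw [c]; push_cast; norm_num) (by norm_num) (by norm_num)
  have ht7 : trm c 7 = 211/7737168600 := by
    unfold trm
    rw [hca7, hcb7, V]
    rw [min_def]
    norm_num
  have hcsum : ∑ i ∈ Finset.range 8, trm c i = (387198347/30948674400 : ℝ) := by
    rw [Finset.sum_range_succ, Finset.sum_range_succ, Finset.sum_range_succ,
      Finset.sum_range_succ, Finset.sum_range_succ, Finset.sum_range_succ,
      Finset.sum_range_succ, Finset.sum_range_succ, Finset.sum_range_zero,
      ht0, ht1, ht2, ht3, ht4, ht5, ht6, ht7]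
    norm_num
  have hfc : Int.fract c = 277/665 := by
    rw [c]; exact Int.fract_eq_self.mpr ⟨by norm_num, by norm_num⟩
  have hLB : (4147998539/15474337200 : ℝ) ≤ sigmaSq c := by
    rw [sigmaSq_eq, hfc, V, min_self]
    have := h8
    rw [hcsum] at this
    have h9 : (387198347/30948674400 : ℝ) ≤ ∑' k, trm c k := this
    norm_num
    linarith
  have hfin : x - x*x + 2 * ((1/6^1) * ((3*x - 1) - (2*x)*(3*x - 1))
      + (1/6^2) * ((4*x - 1) - (4*x - 1)*(9*x - 3))
      + (1/6^3) * ((27*x - 11) - (8*x - 3)*(27*x - 11))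
      + (1/6^4) * ((16*x - 6) - (16*x - 6)*(81*x - 33))
      + (1/6^5) * ((243*x - 101) - (32*x - 13)*(243*x - 101))
      + (1/6^6) * ((729*x - 303) - (64*x - 26)*(729*x - 303))
      + (1/6^7) * ((128*x - 53) - (128*x - 53)*(128*x - 53))
      + (1/20) * (1/6 : ℝ) ^ 7) < (4147998539/15474337200 : ℝ) := by
    have ht : (0:ℝ) < 857/2059 - x := by linarith
    have key : (4147998539/15474337200 : ℝ) - (x - x*x + 2 * ((1/6^1) * ((3*x - 1) - (2*x)*(3*x - 1))
        + (1/6^2) * ((4*x - 1) - (4*x - 1)*(9*x - 3))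
        + (1/6^3) * ((27*x - 11) - (8*x - 3)*(27*x - 11))
        + (1/6^4) * ((16*x - 6) - (16*x - 6)*(81*x - 33))
        + (1/6^5) * ((243*x - 101) - (32*x - 13)*(243*x - 101))
        + (1/6^6) * ((729*x - 303) - (64*x - 26)*(729*x - 303))
        + (1/6^7) * ((128*x - 53) - (128*x - 53)*(128*x - 53))
        + (1/20) * (1/6 : ℝ) ^ 7)) =
        3364129730099/1049650536751891200 + (952429/48032352) * (857/2059 - x)
          + (28687/2187) * (857/2059 - x)^2 := by ring
    have hb1 : (0:ℝ) ≤ (952429/48032352) * (857/2059 - x) :=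
      mul_nonneg (by norm_num) ht.le
    have hb2 : (0:ℝ) ≤ (28687/2187) * (857/2059 - x)^2 :=
      mul_nonneg (by norm_num) (sq_nonneg _)
    linarith [key, hb1, hb2]
  linarith [hUB, hLB, hfin]
end
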